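/- arXiv:1912.10517 — 3 statements merged into one kernel-verified Lean document; each statement's English description precedes it below -/
import Mathlib

section
/- In Mem⁰, suppose n is the smallest natural number such that there exists some k ≥ 1 with G(n, k) = m. Then the frontier value G(n_∞) = G(n, n+1) equals m. -/
/-- Grundy value of Mem⁰: options of (n,k) are (n-a, a) for 1 ≤ a ≤ n, a ≠ k. -/
noncomputable def memZeroG (n k : ℕ) : ℕ :=
  sInf {v : ℕ | v ∉ (((Finset.Icc 1 n).erase k).attach.image
    (fun a => memZeroG (n - a.1) a.1))}
termination_by n
decreasing_by
  have h := Finset.mem_Icc.mp (Finset.mem_of_mem_erase a.2)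
  omega

/-!
Forbidding the move `a = k` removes at most the single option value `G(n - k, k)` from the
options of the frontier position `(n, n + 1)`. So if `G(n, k)` is not that value, it is also
missing from the frontier options, and below it nothing is missing there either: the two mex
values agree. At the first pile size `n` where `m` occurs, `G(n - k, k) = m` is ruled out by
minimality, hence `G(n, n + 1) = G(n, k) = m`.
-/

noncomputable def mex (s : Finset ℕ) : ℕ :=
  sInf {v : ℕ | v ∉ s}

theorem mex_notMem (s : Finset ℕ) : mex s ∉ s :=
  Nat.sInf_mem (s.finite_toSet.infinite_compl.nonempty)

theorem mex_le_of_notMem {s : Finset ℕ} {v : ℕ} (hv : v ∉ s) : mex s ≤ v :=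
  Nat.sInf_le hv

theorem mex_eq_of_subset_of_subset_insert {s t : Finset ℕ} {x : ℕ} (hst : s ⊆ t)
    (hts : t ⊆ insert x s) (hx : mex s ≠ x) : mex t = mex s := by
  have hs_notMem_t : mex s ∉ t := fun hmem =>
    mex_notMem s ((Finset.mem_insert.mp (hts hmem)).resolve_left hx)
  exact le_antisymm (mex_le_of_notMem hs_notMem_t)
    (mex_le_of_notMem fun hmem => mex_notMem t (hst hmem))

noncomputable def memZeroOptionValues (n k : ℕ) : Finset ℕ :=
  ((Finset.Icc 1 n).erase k).image fun a => memZeroG (n - a) a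

theorem memZeroG_eq_mex (n k : ℕ) : memZeroG n k = mex (memZeroOptionValues n k) := by
  rw [memZeroG, mex, memZeroOptionValues]
  conv_rhs => rw [← Finset.attach_image_val (s := (Finset.Icc 1 n).erase k), Finset.image_image]
  rfl

theorem memZeroOptionValues_frontier (n : ℕ) :
    memZeroOptionValues n (n + 1) = (Finset.Icc 1 n).image fun a => memZeroG (n - a) a := by
  rw [memZeroOptionValues, Finset.erase_eq_of_notMem (by simp)]

theorem memZeroOptionValues_subset_frontier (n k : ℕ) :
    memZeroOptionValues n k ⊆ memZeroOptionValues n (n + 1) := by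
  rw [memZeroOptionValues_frontier]
  exact Finset.image_subset_image (Finset.erase_subset k _)

theorem memZeroOptionValues_frontier_subset_insert (n k : ℕ) :
    memZeroOptionValues n (n + 1) ⊆ insert (memZeroG (n - k) k) (memZeroOptionValues n k) := by
  rw [memZeroOptionValues_frontier, memZeroOptionValues,
    ← Finset.image_insert (f := fun a => memZeroG (n - a) a) (a := k)]
  exact Finset.image_subset_image fun a ha => Finset.mem_insert.mpr
    ((eq_or_ne a k).imp id fun hak => Finset.mem_erase.mpr ⟨hak, ha⟩)

theorem memZeroG_of_lt {n k : ℕ} (hnk : n < k) : memZeroG n k = memZeroG n (n + 1) := by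
  rw [memZeroG_eq_mex, memZeroG_eq_mex, memZeroOptionValues,
    Finset.erase_eq_of_notMem (by simp only [Finset.mem_Icc]; omega), memZeroOptionValues_frontier]

theorem memZeroG_eq_frontier_of_ne (n k : ℕ) (hk : memZeroG n k ≠ memZeroG (n - k) k) :
    memZeroG n (n + 1) = memZeroG n k := by
  rw [memZeroG_eq_mex n k] at hk ⊢
  rw [memZeroG_eq_mex]
  exact mex_eq_of_subset_of_subset_insert (memZeroOptionValues_subset_frontier n k)
    (memZeroOptionValues_frontier_subset_insert n k) hk

/-- If n is the smallest pile size at which the Grundy value m occurs,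
then the frontier value G(n_∞) equals m. -/
theorem memZero_first_occurrence_on_frontier (n m : ℕ)
    (h : ∃ k : ℕ, 1 ≤ k ∧ memZeroG n k = m)
    (hmin : ∀ n' < n, ∀ k : ℕ, 1 ≤ k → memZeroG n' k ≠ m) :
    memZeroG n (n + 1) = m := by
  obtain ⟨k, hk, rfl⟩ := h
  rcases lt_or_ge n k with hnk | hkn
  · exact (memZeroG_of_lt hnk).symm
  · exact memZeroG_eq_frontier_of_ne n k fun heq => hmin (n - k) (by omega) k hk heq.symm
end

section
/- In Mem⁰, every natural number m appears as a frontier value: there exists n with G(n_∞) = m. -/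
noncomputable def memOpts (n k : ℕ) : Finset ℕ :=
  ((Finset.Icc 1 n).erase k).attach.image (fun a => memZeroG (n - a.1) a.1)

lemma memZeroG_eq (n k : ℕ) : memZeroG n k = sInf {v : ℕ | v ∉ memOpts n k} := by
  rw [memZeroG]; rfl

lemma mem_memOpts {n k v : ℕ} :
    v ∈ memOpts n k ↔ ∃ a, 1 ≤ a ∧ a ≤ n ∧ a ≠ k ∧ memZeroG (n - a) a = v := by
  unfold memOpts
  simp only [Finset.mem_image, Finset.mem_attach, true_and, Subtype.exists]
  constructor
  · rintro ⟨a, ha, rfl⟩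
    have h1 := Finset.mem_erase.mp ha
    have h2 := Finset.mem_Icc.mp h1.2
    exact ⟨a, h2.1, h2.2, h1.1, rfl⟩
  · rintro ⟨a, h1, h2, h3, h4⟩
    exact ⟨a, Finset.mem_erase.mpr ⟨h3, Finset.mem_Icc.mpr ⟨h1, h2⟩⟩, h4⟩

lemma compl_nonempty (s : Finset ℕ) : {v : ℕ | v ∉ s}.Nonempty := by
  refine ⟨s.sup id + 1, fun h => ?_⟩
  have := Finset.le_sup (f := id) h
  simp only [id] at this
  omega

lemma memZeroG_notMem (n k : ℕ) : memZeroG n k ∉ memOpts n k := by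
  rw [memZeroG_eq]
  exact Nat.sInf_mem (compl_nonempty _)

lemma mem_of_lt_memZeroG {n k u : ℕ} (h : u < memZeroG n k) : u ∈ memOpts n k := by
  rw [memZeroG_eq] at h
  by_contra hu
  exact Nat.notMem_of_lt_sInf h hu

lemma memZeroG_eq_of {n k x : ℕ} (h1 : x ∉ memOpts n k)
    (h2 : ∀ u < x, u ∈ memOpts n k) : memZeroG n k = x := by
  rcases lt_trichotomy (memZeroG n k) x with h | h | h
  · exact absurd (h2 _ h) (memZeroG_notMem n k)
  · exact h
  · exact absurd (mem_of_lt_memZeroG h) h1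

lemma memZeroG_ext {n k k' : ℕ} (hk : n < k) (hk' : n < k') :
    memZeroG n k = memZeroG n k' := by
  have : memOpts n k = memOpts n k' := by
    ext v
    rw [mem_memOpts, mem_memOpts]
    constructor <;> rintro ⟨a, h1, h2, h3, h4⟩ <;> exact ⟨a, h1, h2, by omega, h4⟩
  rw [memZeroG_eq, memZeroG_eq, this]

/-- If `m` appears as some Grundy value, it is a frontier value. -/
lemma min_occ {m : ℕ} (h : ∃ n k, memZeroG n k = m) :
    ∃ n, memZeroG n (n + 1) = m := by
  have h' : ∃ n, ∃ k, memZeroG n k = m := h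
  classical
  set n := Nat.find h' with hn
  obtain ⟨k, hk⟩ := Nat.find_spec h'
  refine ⟨n, memZeroG_eq_of ?_ ?_⟩
  · intro hmem
    obtain ⟨a, h1, h2, _, h4⟩ := mem_memOpts.mp hmem
    have hlt : n - a < n := by omega
    exact Nat.find_min h' hlt ⟨a, h4⟩
  · intro u hu
    rw [← hk] at hu
    obtain ⟨a, h1, h2, _, h4⟩ := mem_memOpts.mp (mem_of_lt_memZeroG hu)
    exact mem_memOpts.mpr ⟨a, h1, h2, by omega, h4⟩

/-- A frontier value is present as an option in all large frontier positions. -/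
lemma present {p v : ℕ} (hp : memZeroG p (p + 1) = v) {n : ℕ} (hn : 2 * p + 1 ≤ n) :
    v ∈ memOpts n (n + 1) := by
  refine mem_memOpts.mpr ⟨n - p, by omega, by omega, by omega, ?_⟩
  have h1 : n - (n - p) = p := by omega
  rw [h1, memZeroG_ext (k' := p + 1) (by omega) (by omega), hp]

/-- Every natural number appears as a frontier value of Mem⁰. -/
theorem memZero_frontier_surjective (m : ℕ) :
    ∃ n : ℕ, memZeroG n (n + 1) = m := by
  induction m using Nat.strong_induction_on with
  | _ m ih =>
    have hch : ∀ u : ℕ, ∃ p, u < m → memZeroG p (p + 1) = u := by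
      intro u
      by_cases hu : u < m
      · obtain ⟨p, hp⟩ := ih u hu
        exact ⟨p, fun _ => hp⟩
      · exact ⟨0, fun h => absurd h hu⟩
    choose f hf using hch
    set N := 2 * (Finset.range m).sup f + 1 with hN
    have hpres : ∀ u < m, u ∈ memOpts N (N + 1) := by
      intro u hu
      have hle : f u ≤ (Finset.range m).sup f :=
        Finset.le_sup (Finset.mem_range.mpr hu)
      exact present (hf u hu) (by omega)
    have hge : m ≤ memZeroG N (N + 1) := by
      by_contra h
      push_neg at h
      exact memZeroG_notMem N (N + 1) (hpres _ h)
    rcases eq_or_lt_of_le hge with h | h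
    · exact ⟨N, h.symm⟩
    · obtain ⟨a, h1, h2, _, h4⟩ := mem_memOpts.mp (mem_of_lt_memZeroG h)
      exact min_occ ⟨N - a, a, h4⟩
end

section
/- (Mortality Theorem) In Mem⁰, suppose m appears at least twice on the frontier: G(n_∞) = G(n'_∞) = m with n < n'. Then for all a > 2n' and all k ≥ 1, G(a, k) ≠ m. -/
lemma memZeroG_mem_options_iff {n k x : ℕ} :
    x ∈ ((Finset.Icc 1 n).erase k).attach.image (fun a => memZeroG (n - a.1) a.1) ↔
      ∃ b ∈ Finset.Icc 1 n, b ≠ k ∧ memZeroG (n - b) b = x := by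
  simp only [Finset.mem_image, Finset.mem_attach, true_and, Subtype.exists, Finset.mem_erase]
  tauto

lemma memZeroG_ne_of_move {a k b : ℕ} (hb : b ∈ Finset.Icc 1 a) (hbk : b ≠ k) :
    memZeroG a k ≠ memZeroG (a - b) b := by
  intro heq
  have hmex : memZeroG a k ∉
      ((Finset.Icc 1 a).erase k).attach.image (fun a' => memZeroG (a - a'.1) a'.1) := by
    rw [memZeroG]
    exact Nat.sInf_mem (Set.Finite.infinite_compl (Finset.finite_toSet _)).nonempty
  exact hmex (memZeroG_mem_options_iff.mpr ⟨b, hb, hbk, heq.symm⟩)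

lemma memZeroG_eq_frontier_of_lt {n k : ℕ} (hk : n < k) :
    memZeroG n k = memZeroG n (n + 1) := by
  rw [memZeroG, memZeroG]
  congr 2
  ext x
  simp only [memZeroG_mem_options_iff]
  refine not_congr <| exists_congr fun b => and_congr_right fun hb => and_congr_left fun _ => ?_
  have := Finset.mem_Icc.mp hb
  omega

lemma memZeroG_ne_frontier {a k c : ℕ} (hc : 2 * c < a) (hk : a - c ≠ k) :
    memZeroG a k ≠ memZeroG c (c + 1) := by
  have hmove := memZeroG_ne_of_move (Finset.mem_Icc.mpr ⟨by omega, Nat.sub_le a c⟩) hk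
  rwa [Nat.sub_sub_self (by omega), memZeroG_eq_frontier_of_lt (n := c) (by omega)] at hmove

/-- Mortality Theorem: if m appears at least twice on the frontier, at n < n',
then m never occurs as a Grundy value for pile sizes a > 2n'. -/
theorem memZero_mortality (n n' m : ℕ) (hnn' : n < n')
    (h : memZeroG n (n + 1) = m) (h' : memZeroG n' (n' + 1) = m) :
    ∀ a : ℕ, 2 * n' < a → ∀ k : ℕ, 1 ≤ k → memZeroG a k ≠ m := by
  intro a ha k _
  by_cases hk : a - n = k
  · rw [← h']
    exact memZeroG_ne_frontier ha (by omega)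
  · rw [← h]
    exact memZeroG_ne_frontier (by omega) hk
end
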